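/- When δ₁ = δ₂ = δ, the changepoint limiting degree distribution reduces to the standard one: p⋆_i(u; δ, δ) = p_i(δ) for all i ≥ 1 and u ≥ t⋆. -/

import Mathlib

/-!
Put `y = 1 - e^{-τ⋆}` and `b = 3 + 2δ`. The tail `P(ξ³_{2δ}(τ⋆) > i + 2)` is the regularized
incomplete beta function `I_y(i, b)`, and since `t⋆/u = e^{-(2+δ)τ⋆}`, each summand
`(t⋆/u) p_j(δ) P(ξ^j_δ(τ⋆) = i)` equals `p_i(δ) q_j(y)` with `q_j = incBetaTerm b i j`
(the factor `Γ(j + δ)` cancels). For integer `i`, `1 - I_y(i, b) = ∑_{j=1}^i q_j(y)`: both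
sides equal `1` at `y = 0`, and `q_{k+1}' = F_{k+1} - F_k` with `F = incBetaFlux b i`, so the
derivative of the sum telescopes to `-I_y'`. Hence `p⋆_i = p_i(δ) (I_y + (1 - I_y)) = p_i(δ)`.
-/

open Real MeasureTheory

/-- Pmf of a linear birth-immigration process `ξ^j_θ(t)` started at `j`. -/
noncomputable def birthPMF (θ : ℝ) (j i : ℕ) (t : ℝ) : ℝ :=
  Gamma ((i:ℝ) + θ) / (Gamma ((i:ℝ) - (j:ℝ) + 1) * Gamma ((j:ℝ) + θ)) *
    exp (-((j:ℝ) + θ) * t) * (1 - exp (-t))^(i - j)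

/-- Tail of a linear birth-immigration process `ξ^j_θ(t)` started at `j`. -/
noncomputable def birthTail (θ : ℝ) (j i : ℕ) (t : ℝ) : ℝ :=
  Gamma ((i:ℝ) + 1 + θ) / (Gamma ((i:ℝ) - (j:ℝ) + 1) * Gamma ((j:ℝ) + θ)) *
    ∫ x in (0:ℝ)..(1 - exp (-t)), x^(i - j) * (1 - x) ^ ((j:ℝ) - 1 + θ)

/-- Limiting PA degree pmf `p_i(δ)`. -/
noncomputable def pdeg (δ : ℝ) (i : ℕ) : ℝ :=
  (2+δ) * Gamma (3+2*δ) * Gamma ((i:ℝ)+δ) / (Gamma (1+δ) * Gamma ((i:ℝ)+3+2*δ))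

/-- Embedding time elapsed after the changepoint. -/
noncomputable def tauStar (tstar δ₂ u : ℝ) : ℝ := (1/(2+δ₂)) * Real.log (u/tstar)

/-- Limiting degree pmf of the changepoint model `PA(t⋆; δ₁, δ₂)`. -/
noncomputable def pstar (tstar δ₁ δ₂ : ℝ) (i : ℕ) (u : ℝ) : ℝ :=
  pdeg δ₂ i * birthTail (2*δ₂) 3 (i+2) (tauStar tstar δ₂ u) +
    (tstar/u) * ∑ j ∈ Finset.Icc 1 i, pdeg δ₁ j * birthPMF δ₂ j i (tauStar tstar δ₂ u)

open Finset

noncomputable def incBetaCoef (b : ℝ) (n j : ℕ) : ℝ :=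
  Gamma (n + b) / (Gamma ((n : ℝ) - j + 1) * Gamma (j + b))

noncomputable def incBetaTerm (b : ℝ) (n j : ℕ) (y : ℝ) : ℝ :=
  incBetaCoef b n j * y ^ (n - j) * (1 - y) ^ ((j : ℝ) + b - 1)

noncomputable def incBetaFlux (b : ℝ) (n j : ℕ) (y : ℝ) : ℝ :=
  incBetaCoef b n j * (n - j : ℕ) * y ^ (n - j - 1) * (1 - y) ^ ((j : ℝ) + b - 1)

lemma sum_Icc_one_eq_sum_range {M : Type*} [AddCommMonoid M] (f : ℕ → M) (n : ℕ) :
    ∑ j ∈ Icc 1 n, f j = ∑ k ∈ range n, f (k + 1) := by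
  rw [range_eq_Ico, sum_Ico_add' f 0 n 1, zero_add, ← Ico_succ_right_eq_Icc]
  rfl

section IncompleteBeta

variable {b : ℝ} {n : ℕ}

lemma incBetaCoef_succ_mul (hb : 0 < b) {k : ℕ} (hk : k < n) :
    incBetaCoef b n (k + 1) * (k + b) = incBetaCoef b n k * (n - k : ℕ) := by
  have hnk : (0 : ℝ) < (n - k : ℕ) := by exact_mod_cast Nat.sub_pos_of_lt hk
  have hkb : (0 : ℝ) < k + b := by positivity
  unfold incBetaCoef
  rw [show ((k + 1 : ℕ) : ℝ) + b = (k + b) + 1 by push_cast; ring, Gamma_add_one hkb.ne',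
    show (n : ℝ) - (k + 1 : ℕ) + 1 = (n - k : ℕ) by push_cast [hk.le]; ring,
    show (n : ℝ) - k + 1 = (n - k : ℕ) + 1 by push_cast [hk.le]; ring,
    Gamma_add_one hnk.ne']
  have := (Gamma_pos_of_pos hkb).ne'
  have := (Gamma_pos_of_pos hnk).ne'
  field_simp

lemma incBetaCoef_zero_mul (hn : 1 ≤ n) :
    incBetaCoef b n 0 * n = Gamma (n + b) / (Gamma n * Gamma b) := by
  have hn0 : (n : ℝ) ≠ 0 := by positivity
  unfold incBetaCoef
  rw [Nat.cast_zero, sub_zero, zero_add, Gamma_add_one hn0]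
  field_simp

lemma sum_incBetaTerm_zero (hb : 0 < b) (hn : 1 ≤ n) :
    ∑ j ∈ Icc 1 n, incBetaTerm b n j 0 = 1 := by
  rw [sum_eq_single_of_mem n (mem_Icc.2 ⟨hn, le_rfl⟩)]
  · have : Gamma (n + b) ≠ 0 := (Gamma_pos_of_pos (by positivity)).ne'
    simp [incBetaTerm, incBetaCoef, this]
  · intro j hj hjn
    rw [incBetaTerm, zero_pow (by grind)]
    ring

lemma hasDerivAt_incBetaTerm_succ (hb : 0 < b) {k : ℕ} (hk : k < n) {y : ℝ} (hy : y < 1) :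
    HasDerivAt (incBetaTerm b n (k + 1))
      (incBetaFlux b n (k + 1) y - incBetaFlux b n k y) y := by
  have h1y : 1 - y ≠ 0 := by linarith
  have hpow := (hasDerivAt_pow (n - (k + 1)) y).const_mul (incBetaCoef b n (k + 1))
  have hrpow := (Real.hasDerivAt_rpow_const (p := ((k + 1 : ℕ) : ℝ) + b - 1) (Or.inl h1y)).comp y
    ((hasDerivAt_id y).const_sub 1)
  refine (hpow.mul hrpow).congr_deriv ?_
  unfold incBetaFlux
  rw [← incBetaCoef_succ_mul hb hk, show n - k - 1 = n - (k + 1) by omega,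
    show ((k + 1 : ℕ) : ℝ) + b - 1 - 1 = k + b - 1 by push_cast; ring]
  simp only [Function.comp_apply]
  push_cast
  ring

lemma hasDerivAt_one_sub_sum_incBetaTerm (hb : 0 < b) (hn : 1 ≤ n) {y : ℝ} (hy : y < 1) :
    HasDerivAt (fun y ↦ 1 - ∑ j ∈ Icc 1 n, incBetaTerm b n j y)
      (Gamma (n + b) / (Gamma n * Gamma b) * (y ^ (n - 1) * (1 - y) ^ (b - 1))) y := by
  simp_rw [sum_Icc_one_eq_sum_range]
  refine ((HasDerivAt.fun_sum fun k hk ↦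
    hasDerivAt_incBetaTerm_succ hb (mem_range.1 hk) hy).const_sub 1).congr_deriv ?_
  rw [sum_range_sub (incBetaFlux b n · y), ← incBetaCoef_zero_mul hn]
  simp [incBetaFlux]
  ring

theorem integral_pow_mul_one_sub_rpow (hb : 0 < b) (hn : 1 ≤ n) {s : ℝ} (hs : s < 1) :
    Gamma (n + b) / (Gamma n * Gamma b) * ∫ x in 0..s, x ^ (n - 1) * (1 - x) ^ (b - 1) =
      1 - ∑ j ∈ Icc 1 n, incBetaTerm b n j s := by
  have hlt : ∀ x ∈ Set.uIcc 0 s, x < 1 := fun x hx ↦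
    (Set.mem_uIcc.1 hx).elim (fun h ↦ h.2.trans_lt hs) (fun h ↦ by linarith [h.2])
  have hcont : ContinuousOn (fun x : ℝ ↦ x ^ (n - 1) * (1 - x) ^ (b - 1)) (Set.uIcc 0 s) :=
    (continuous_pow _).continuousOn.mul <|
      (continuous_const.sub continuous_id).continuousOn.rpow_const fun x hx ↦
        Or.inl (sub_ne_zero.2 (hlt x hx).ne')
  rw [← intervalIntegral.integral_const_mul, intervalIntegral.integral_eq_sub_of_hasDerivAt
    (fun x hx ↦ hasDerivAt_one_sub_sum_incBetaTerm hb hn (hlt x hx))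
    (continuousOn_const.mul hcont).intervalIntegrable, sum_incBetaTerm_zero hb hn]
  ring

end IncompleteBeta

lemma birthTail_eq_one_sub_sum_incBetaTerm {δ : ℝ} (hδ : -1 < δ) {i : ℕ} (hi : 1 ≤ i) (t : ℝ) :
    birthTail (2 * δ) 3 (i + 2) t =
      1 - ∑ j ∈ Icc 1 i, incBetaTerm (3 + 2 * δ) i j (1 - exp (-t)) := by
  have key := integral_pow_mul_one_sub_rpow (b := 3 + 2 * δ) (by linarith) hi
    (s := 1 - exp (-t)) (by linarith [exp_pos (-t)])
  rw [← key, birthTail, show i + 2 - 3 = i - 1 by omega]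
  congr 3 <;> push_cast <;> ring_nf

lemma exp_mul_pdeg_mul_birthPMF {δ : ℝ} (hδ : -1 < δ) {j : ℕ} (hj : 1 ≤ j) (i : ℕ) (t : ℝ) :
    exp (-((2 + δ) * t)) * (pdeg δ j * birthPMF δ j i t) =
      pdeg δ i * incBetaTerm (3 + 2 * δ) i j (1 - exp (-t)) := by
  have hj' : (1 : ℝ) ≤ j := by exact_mod_cast hj
  have hexp : (1 - (1 - exp (-t))) ^ ((j : ℝ) + (3 + 2 * δ) - 1) =
      exp (-((j : ℝ) + δ) * t) * exp (-((2 + δ) * t)) := by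
    rw [sub_sub_cancel, ← exp_mul, ← exp_add]
    ring_nf
  rw [pdeg, pdeg, birthPMF, incBetaTerm, incBetaCoef, hexp]
  have := (Gamma_pos_of_pos (show 0 < 1 + δ by linarith)).ne'
  have := (Gamma_pos_of_pos (show 0 < (j : ℝ) + δ by linarith)).ne'
  have := (Gamma_pos_of_pos (show 0 < (i : ℝ) + 3 + 2 * δ by
    linarith [i.cast_nonneg' (α := ℝ)])).ne'
  have := (Gamma_pos_of_pos (show 0 < (j : ℝ) + 3 + 2 * δ by linarith)).ne'
  rw [show (i : ℝ) + (3 + 2 * δ) = i + 3 + 2 * δ by ring,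
    show (j : ℝ) + (3 + 2 * δ) = j + 3 + 2 * δ by ring]
  field_simp

lemma exp_neg_mul_tauStar {tstar δ u : ℝ} (h : 0 < u / tstar) (hδ : 2 + δ ≠ 0) :
    exp (-((2 + δ) * tauStar tstar δ u)) = tstar / u := by
  rw [tauStar, ← mul_assoc, mul_one_div_cancel hδ, one_mul, exp_neg, exp_log h, inv_div]

/-- With no actual change (`δ₁ = δ₂ = δ`), the changepoint limiting pmf reduces to
the standard limiting PA degree distribution. -/
theorem changepoint_pmf_no_change (tstar δ u : ℝ) (hδ : -1 < δ) (hts : 0 < tstar)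
    (hu : tstar ≤ u) (i : ℕ) (hi : 1 ≤ i) :
    pstar tstar δ δ i u = pdeg δ i := by
  set t := tauStar tstar δ u
  have hrate : tstar / u = exp (-((2 + δ) * t)) :=
    (exp_neg_mul_tauStar (div_pos (hts.trans_le hu) hts) (by linarith)).symm
  have hsum : tstar / u * ∑ j ∈ Icc 1 i, pdeg δ j * birthPMF δ j i t =
      pdeg δ i * ∑ j ∈ Icc 1 i, incBetaTerm (3 + 2 * δ) i j (1 - exp (-t)) := by
    rw [hrate, mul_sum, mul_sum]
    exact sum_congr rfl fun j hj ↦ exp_mul_pdeg_mul_birthPMF hδ (mem_Icc.1 hj).1 i t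
  rw [pstar, hsum, birthTail_eq_one_sub_sum_incBetaTerm hδ hi]
  ring
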